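/- (Characterization, hard direction) Let 𝔄 be a family of equivalence structures with no infinite classes. If 𝔄 is finitely separable then 𝔄 is InfEx_≅-learnable: there exists a learner (of arbitrary complexity) that, on every informant for every ω-presentation of every A ∈ 𝔄, converges to an index of a structure isomorphic to A. -/

import Mathlib

open Set

/-- An equivalence structure on ℕ. -/
structure EqStruct where
  rel : ℕ → ℕ → Prop
  equiv : Equivalence rel

namespace EqStruct

/-- Isomorphism of equivalence structures. -/
def Isom (A B : EqStruct) : Prop :=
  ∃ f : ℕ → ℕ, Function.Bijective f ∧ ∀ x y, A.rel x y ↔ B.rel (f x) (f y)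

/-- Embedding of equivalence structures. -/
def Embeds (A B : EqStruct) : Prop :=
  ∃ f : ℕ → ℕ, Function.Injective f ∧ ∀ x y, A.rel x y ↔ B.rel (f x) (f y)

/-- Bi-embeddability. -/
def Biembed (A B : EqStruct) : Prop := A.Embeds B ∧ B.Embeds A

/-- The equivalence class of `x`. -/
def classOf (A : EqStruct) (x : ℕ) : Set ℕ := {y | A.rel x y}

/-- The number of equivalence classes of size `k` (counted in `ℕ∞`). -/
noncomputable def numClasses (A : EqStruct) (k : ℕ∞) : ℕ∞ :=
  {C : Set ℕ | (∃ x, C = A.classOf x) ∧ C.encard = k}.encard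

/-- `A` finitely embeds into `B`: every finite substructure `A[s]` embeds into `B`. -/
def FinEmbeds (A B : EqStruct) : Prop :=
  ∀ s : ℕ, ∃ f : ℕ → ℕ, Set.InjOn f (Set.Iio s) ∧
    ∀ x < s, ∀ y < s, (A.rel x y ↔ B.rel (f x) (f y))

end EqStruct

/-- An informant for a structure: lists every pair, labelled correctly. -/
def IsInformant (A : EqStruct) (I : ℕ → (ℕ × ℕ) × Bool) : Prop :=
  (∀ p : ℕ × ℕ, ∃ n, (I n).1 = p) ∧
  (∀ n, ((I n).2 = true ↔ A.rel (I n).1.1 (I n).1.2))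

/-- A learner from informants: `none` is the `?` symbol. -/
abbrev Learner := List ((ℕ × ℕ) × Bool) → Option ℕ

/-- The initial segment `I[n]`. -/
def seg (I : ℕ → (ℕ × ℕ) × Bool) (n : ℕ) : List ((ℕ × ℕ) × Bool) :=
  (List.range n).map I

/-- `M` InfEx-learns `A` up to `sim`, with hypotheses indices into `Me`. -/
def InfExLearns (Me : ℕ → EqStruct) (sim : EqStruct → EqStruct → Prop)
    (M : Learner) (A : EqStruct) : Prop :=
  ∀ B, B.Isom A → ∀ I, IsInformant B I →
    ∃ e, sim (Me e) B ∧ ∃ N, ∀ n ≥ N, M (seg I n) = some e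

/-- `M` finitely learns `A` from informants up to `sim`. -/
def InfFinLearns (Me : ℕ → EqStruct) (sim : EqStruct → EqStruct → Prop)
    (M : Learner) (A : EqStruct) : Prop :=
  ∀ B, B.Isom A → ∀ I, IsInformant B I →
    ∃ e, sim (Me e) B ∧ (∃ n, M (seg I n) = some e) ∧
      ∀ n e', M (seg I n) = some e' → e' = e

/-- A text for a structure: enumerates exactly the related pairs (`none` is pause). -/
def IsText (A : EqStruct) (T : ℕ → Option (ℕ × ℕ)) : Prop :=
  ∀ x y, A.rel x y ↔ ∃ n, T n = some (x, y)

/-- A learner from texts. -/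
abbrev TxtLearner := List (Option (ℕ × ℕ)) → Option ℕ

/-- The initial segment `T[n]` of a text. -/
def tseg (T : ℕ → Option (ℕ × ℕ)) (n : ℕ) : List (Option (ℕ × ℕ)) :=
  (List.range n).map T

/-- `M` TxtEx-learns `A` up to `sim`. -/
def TxtExLearns (Me : ℕ → EqStruct) (sim : EqStruct → EqStruct → Prop)
    (M : TxtLearner) (A : EqStruct) : Prop :=
  ∀ B, B.Isom A → ∀ T, IsText B T →
    ∃ e, sim (Me e) B ∧ ∃ N, ∀ n ≥ N, M (tseg T n) = some e

/-- `σ` describes a finite part of `A`: it is an initial segment of an informant for `A`. -/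
def DescribesPart (A : EqStruct) (σ : List ((ℕ × ℕ) × Bool)) : Prop :=
  ∃ I, IsInformant A I ∧ σ = seg I σ.length

/-- The character of `A`: pairs `(k, i)` such that `A` has at least `i` classes of size `k`. -/
noncomputable def charOf (A : EqStruct) : Set (ℕ∞ × ℕ) :=
  {p | (p.2 : ℕ∞) ≤ A.numClasses p.1}

/-- A family has finitely many isomorphism types. -/
def FinTypes (𝔅 : Set EqStruct) : Prop :=
  ∃ T : Set EqStruct, T.Finite ∧ ∀ B ∈ 𝔅, ∃ C ∈ T, B.Isom C

/-- `S` is a limit of the subfamily `𝔅`. -/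
noncomputable def IsLimitOf (S : EqStruct) (𝔅 : Set EqStruct) : Prop :=
  (FinTypes 𝔅 ∧ ∃ A ∈ 𝔅, ¬ A.Isom S ∧ A.FinEmbeds S ∧ charOf S ⊆ charOf A) ∨
  (¬ FinTypes 𝔅 ∧ (∀ A ∈ 𝔅, ¬ A.Isom S ∧ A.FinEmbeds S) ∧
    charOf S ⊆ {p | ¬ FinTypes {B | B ∈ 𝔅 ∧ p ∈ charOf B}})

/-- `𝔄` is finitely separable: no subfamily of `𝔄` has a limit in `𝔄`. -/
noncomputable def FinitelySeparable (𝔄 : Set EqStruct) : Prop :=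
  ∀ 𝔅 ⊆ 𝔄, ∀ S ∈ 𝔄, ¬ IsLimitOf S 𝔅

/-!
The learner reads off the window `[0, W)` of the structure on which the informant has already
decided every pair, and tests a hypothesis `E` at levels `v ≤ W`: below the cap `v`, `E` may have
no more classes of size `≥ k` than the window shows, and every window class inside `[0, v)` must
be matched by a class of `E` of the same size. A correct hypothesis eventually passes every level,
and the learner outputs the least index of a member of `𝔄` reaching the highest level.

If the learner fails on a copy `B` of `A`, members of `𝔄` not isomorphic to `A` pass arbitrarily
high levels. Passing a high level bounds their numbers of classes of size `≥ k` by those of `A`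
(so, by a greedy matching of classes, they finitely embed into `A`) and eventually provides every
point of the character of `A`. A tail of such a sequence has `A` as a limit: in the finite case
through an isomorphism type that recurs infinitely often, otherwise directly. This contradicts
finite separability.
-/

open Filter

open scoped Finset in
/-- Greedy matching: serving the heaviest item first never blocks the others, so the nested
Hall condition suffices. -/
lemma Finset.exists_injOn_of_card_filter_le {ι α β : Type*} [Nonempty α] [LinearOrder β]
    (w : ι → β) (w' : α → β) (F : Finset ι) (T : Set α)
    (h : ∀ i ∈ F, (#{j ∈ F | w i ≤ w j} : ℕ∞) ≤ {t ∈ T | w i ≤ w' t}.encard) :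
    ∃ g : ι → α, Set.InjOn g F ∧ ∀ i ∈ F, g i ∈ T ∧ w i ≤ w' (g i) := by
  classical
  induction F using Finset.induction_on_max_value w generalizing T with
  | empty => exact ⟨fun _ => Classical.arbitrary α, by simp, by simp⟩
  | insert a s has hmax ih =>
    have hcount : ∀ i ∈ insert a s, w i ≤ w a →
        (#{j ∈ insert a s | w i ≤ w j} : ℕ∞) = #{j ∈ s | w i ≤ w j} + 1 := by
      intro i _ hi
      rw [Finset.filter_insert, if_pos hi, Finset.card_insert_of_notMem
        (fun ha => has (Finset.mem_filter.mp ha).1)]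
      push_cast; rfl
    obtain ⟨t₀, ht₀T, ht₀⟩ : ∃ t₀ ∈ T, w a ≤ w' t₀ := by
      have := (h a (Finset.mem_insert_self a s)).trans_lt' (by
        rw [hcount a (Finset.mem_insert_self a s) le_rfl]; positivity)
      exact Set.encard_pos.mp this
    obtain ⟨g, hginj, hg⟩ := ih (T \ {t₀}) fun i hi => by
      have hia : w i ≤ w a := hmax i hi
      have hsplit : {t ∈ T | w i ≤ w' t} = insert t₀ {t ∈ T \ {t₀} | w i ≤ w' t} := by
        ext t
        by_cases ht : t = t₀
        · subst ht; simp [ht₀T, hia.trans ht₀]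
        · simp [ht]
      have := h i (Finset.mem_insert_of_mem hi)
      rwa [hcount i (Finset.mem_insert_of_mem hi) hia, hsplit,
        Set.encard_insert_of_notMem (fun ht => ht.1.2 rfl),
        ENat.add_le_add_iff_right ENat.one_ne_top] at this
    have hne : ∀ i ∈ s, i ≠ a := fun i hi hia => has (hia ▸ hi)
    refine ⟨Function.update g a t₀, ?_, ?_⟩
    · rw [Finset.coe_insert, Set.injOn_insert (by exact_mod_cast has)]
      refine ⟨fun i hi j hj hij => hginj hi hj ?_, ?_⟩
      · rwa [Function.update_of_ne (hne i hi),
          Function.update_of_ne (hne j hj)] at hij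
      · rintro ⟨i, hi, hit⟩
        rw [Function.update_self, Function.update_of_ne (hne i hi)] at hit
        exact (hg i hi).1.2 hit
    · intro i hi
      rcases Finset.mem_insert.mp hi with rfl | hi
      · simpa using ⟨ht₀T, ht₀⟩
      · rw [Function.update_of_ne (hne i hi)]
        exact ⟨(hg i hi).1.1, (hg i hi).2⟩

lemma Set.Finite.eventually_subset_Iio {D : Set ℕ} (hD : D.Finite) :
    ∀ᶠ W in atTop, D ⊆ Set.Iio W := by
  obtain ⟨b, hb⟩ := hD.bddAbove
  filter_upwards [eventually_gt_atTop b] with W hW y hy using (hb hy).trans_lt hW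

/-- Unless `g ≡ ⊤`, `g` vanishes at some `K`; once `V` exceeds `K` and the finite values of `g`
on `[0, K]`, the cap `V` hides nothing there, and beyond `K` the antitone `f` is already `0`. -/
lemma ENat.eventually_le_of_min_le {g : ℕ → ℕ∞} (hg : ∀ k, g k ≠ ⊤ → ∃ K, g K = 0) :
    ∀ᶠ V in atTop, ∀ f : ℕ → ℕ∞, Antitone f → (∀ k ≤ V, min (f k) V ≤ g k) → ∀ k, f k ≤ g k := by
  by_cases htop : ∀ k, g k = ⊤
  · exact Eventually.of_forall fun _ _ _ _ k => (htop k).symm ▸ le_top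
  obtain ⟨k₀, hk₀⟩ := not_forall.mp htop
  obtain ⟨K, hK⟩ := hg k₀ hk₀
  set M := (Finset.range (K + 1)).sup fun k => (g k).toNat
  filter_upwards [eventually_gt_atTop (K + M)] with V hV f hf hmin
  have hsmall : ∀ k ≤ K, f k ≤ g k := by
    intro k hk
    by_cases hgk : g k = ⊤
    · exact hgk ▸ le_top
    have hgV : g k < V := by
      have hM : (g k).toNat ≤ M := Finset.le_sup (f := fun k => (g k).toNat)
        (Finset.mem_range.mpr (by omega))
      rw [← ENat.natCast_toNat hgk, Nat.cast_lt]
      omega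
    have hfk := hmin k (by omega)
    rcases min_lt_iff.mp (hfk.trans_lt hgV) with h | h
    · rwa [min_eq_left h.le] at hfk
    · exact absurd h (lt_irrefl _)
  intro k
  rcases le_or_gt k K with hk | hk
  · exact hsmall k hk
  · calc f k ≤ f K := hf hk.le
      _ ≤ g K := hsmall K le_rfl
      _ = 0 := hK
      _ ≤ g k := zero_le

def windowClass (r : ℕ → ℕ → Prop) (W x : ℕ) : Set ℕ := {y | y < W ∧ r x y}

def windowClasses (r : ℕ → ℕ → Prop) (W : ℕ) : Set (Set ℕ) := windowClass r W '' Set.Iio W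

lemma windowClasses_congr {r r' : ℕ → ℕ → Prop} {W : ℕ}
    (h : ∀ x < W, ∀ y < W, r x y ↔ r' x y) : windowClasses r W = windowClasses r' W :=
  Set.image_congr fun x hx => Set.ext fun y => and_congr_right fun hy => h x hx y hy

lemma windowClasses_finite (r : ℕ → ℕ → Prop) (W : ℕ) : (windowClasses r W).Finite :=
  (Set.finite_Iio W).image _

noncomputable def countGe (𝒞 : Set (Set ℕ)) (k : ℕ) : ℕ∞ := {C ∈ 𝒞 | (k : ℕ∞) ≤ C.encard}.encard

noncomputable def countBelow (𝒞 : Set (Set ℕ)) (v k : ℕ) : ℕ∞ :=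
  {C ∈ 𝒞 | C ⊆ Set.Iio v ∧ C.encard = k}.encard

namespace EqStruct

variable {A B E S : EqStruct}

lemma classOf_eq_of_mem {x y : ℕ} (h : y ∈ A.classOf x) : A.classOf y = A.classOf x :=
  Set.ext fun _ => ⟨A.equiv.trans h, A.equiv.trans (A.equiv.symm h)⟩

lemma Isom.refl (A : EqStruct) : A.Isom A :=
  ⟨id, Function.bijective_id, fun _ _ => Iff.rfl⟩

lemma Isom.symm (h : A.Isom B) : B.Isom A := by
  obtain ⟨f, hf, hrel⟩ := h
  set g := Equiv.ofBijective f hf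
  refine ⟨g.symm, g.symm.bijective, fun x y => ?_⟩
  rw [hrel, Equiv.ofBijective_apply_symm_apply f hf, Equiv.ofBijective_apply_symm_apply f hf]

lemma Isom.trans {C : EqStruct} (h₁ : A.Isom B) (h₂ : B.Isom C) : A.Isom C := by
  obtain ⟨f, hf, hrf⟩ := h₁
  obtain ⟨g, hg, hrg⟩ := h₂
  exact ⟨g ∘ f, hg.comp hf, fun x y => (hrf x y).trans (hrg (f x) (f y))⟩

lemma image_classOf_of_rel_iff {f : ℕ → ℕ} (hf : Function.Surjective f)
    (hrel : ∀ x y, A.rel x y ↔ B.rel (f x) (f y)) (x : ℕ) :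
    f '' A.classOf x = B.classOf (f x) := by
  ext y
  obtain ⟨z, rfl⟩ := hf y
  exact ⟨fun ⟨w, hw, hwz⟩ => hwz ▸ (hrel x w).mp hw, fun hz => ⟨z, (hrel x z).mpr hz, rfl⟩⟩

lemma Isom.encard_classes_eq (h : A.Isom B) (P : ℕ∞ → Prop) :
    {C : Set ℕ | (∃ x, C = A.classOf x) ∧ P C.encard}.encard =
      {C : Set ℕ | (∃ x, C = B.classOf x) ∧ P C.encard}.encard := by
  obtain ⟨f, hf, hrel⟩ := h
  rw [← (Set.image_injective.mpr hf.1).injOn.encard_image]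
  congr 1
  ext C
  constructor
  · rintro ⟨D, ⟨⟨x, rfl⟩, hP⟩, rfl⟩
    exact ⟨⟨f x, image_classOf_of_rel_iff hf.2 hrel x⟩, by rwa [hf.1.injOn.encard_image]⟩
  · rintro ⟨⟨y, rfl⟩, hP⟩
    obtain ⟨x, rfl⟩ := hf.2 y
    rw [← image_classOf_of_rel_iff hf.2 hrel x, hf.1.injOn.encard_image] at hP
    exact ⟨A.classOf x, ⟨⟨x, rfl⟩, hP⟩, image_classOf_of_rel_iff hf.2 hrel x⟩

lemma Isom.numClasses_eq (h : A.Isom B) (k : ℕ∞) : A.numClasses k = B.numClasses k :=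
  h.encard_classes_eq (· = k)

lemma Isom.charOf_eq (h : A.Isom B) : charOf A = charOf B := by
  simp only [charOf, h.numClasses_eq]

lemma Isom.classOf_finite (h : A.Isom B) (hB : ∀ x, (B.classOf x).Finite) (x : ℕ) :
    (A.classOf x).Finite := by
  obtain ⟨f, hf, hrel⟩ := h
  refine Set.Finite.of_finite_image ?_ hf.1.injOn
  rw [image_classOf_of_rel_iff hf.2 hrel]
  exact hB (f x)

lemma numClasses_top (hA : ∀ x, (A.classOf x).Finite) : A.numClasses ⊤ = 0 := by
  rw [numClasses, Set.encard_eq_zero, Set.eq_empty_iff_forall_notMem]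
  rintro _ ⟨⟨x, rfl⟩, htop⟩
  exact Set.encard_ne_top_iff.mpr (hA x) htop

noncomputable def numClassesGe (A : EqStruct) (k : ℕ) : ℕ∞ :=
  {C : Set ℕ | (∃ x, C = A.classOf x) ∧ (k : ℕ∞) ≤ C.encard}.encard

lemma Isom.numClassesGe_eq (h : A.Isom B) (k : ℕ) : A.numClassesGe k = B.numClassesGe k :=
  h.encard_classes_eq ((k : ℕ∞) ≤ ·)

lemma numClassesGe_antitone (A : EqStruct) : Antitone A.numClassesGe :=
  fun _ _ hkl => Set.encard_le_encard fun _ ⟨hC, hl⟩ => ⟨hC, le_trans (by exact_mod_cast hkl) hl⟩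

/-- Finitely many finite classes have bounded size. -/
lemma exists_numClassesGe_eq_zero (hA : ∀ x, (A.classOf x).Finite) {k : ℕ}
    (hk : A.numClassesGe k ≠ ⊤) : ∃ K, A.numClassesGe K = 0 := by
  set 𝒞 := {C : Set ℕ | (∃ x, C = A.classOf x) ∧ (k : ℕ∞) ≤ C.encard}
  obtain ⟨b, hb⟩ := ((Set.encard_ne_top_iff.mp hk).image fun C => C.encard.toNat).bddAbove
  refine ⟨k + b + 1, Set.encard_eq_zero.mpr (Set.eq_empty_iff_forall_notMem.mpr ?_)⟩
  rintro C ⟨⟨x, rfl⟩, hC⟩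
  have hCk : A.classOf x ∈ 𝒞 := ⟨⟨x, rfl⟩, le_trans (by exact_mod_cast (by omega)) hC⟩
  have hsize := hb (Set.mem_image_of_mem _ hCk)
  rw [← ENat.natCast_toNat (Set.encard_ne_top_iff.mpr (hA x)), Nat.cast_le] at hC
  omega

lemma windowClass_eq (A : EqStruct) (W x : ℕ) :
    windowClass A.rel W x = A.classOf x ∩ Set.Iio W :=
  Set.ext fun _ => and_comm

lemma windowClass_eq_iff {W x y : ℕ} (hy : y < W) :
    windowClass A.rel W x = windowClass A.rel W y ↔ A.rel x y := by
  refine ⟨fun h => (h ▸ ⟨hy, A.equiv.refl y⟩ : y ∈ windowClass A.rel W x).2, fun h => ?_⟩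
  exact Set.ext fun z => and_congr_right fun _ =>
    ⟨A.equiv.trans (A.equiv.symm h), A.equiv.trans h⟩

lemma rel_iff_classOf_eq {a b u v : ℕ} (ha : a ∈ S.classOf u) (hb : b ∈ S.classOf v) :
    S.rel a b ↔ S.classOf u = S.classOf v := by
  refine ⟨fun h => ?_, fun h => S.equiv.trans (S.equiv.symm ha) (h ▸ hb : b ∈ S.classOf u)⟩
  rw [← classOf_eq_of_mem ha, ← classOf_eq_of_mem hb,
    classOf_eq_of_mem (show b ∈ S.classOf a from h)]

lemma finEmbeds_of_matching (s : ℕ) (G : Set ℕ → Set ℕ)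
    (hG : Set.InjOn G (windowClasses A.rel s))
    (hGS : ∀ C ∈ windowClasses A.rel s, (∃ u, G C = S.classOf u) ∧ C.encard ≤ (G C).encard) :
    ∃ f : ℕ → ℕ, Set.InjOn f (Set.Iio s) ∧
      ∀ x < s, ∀ y < s, (A.rel x y ↔ S.rel (f x) (f y)) := by
  have hj : ∀ C ∈ windowClasses A.rel s, ∃ j : ℕ → ℕ, Set.MapsTo j C (G C) ∧ Set.InjOn j C :=
    fun C hC => ((Set.finite_Iio s).subset (by obtain ⟨x, -, rfl⟩ := hC; exact fun _ h => h.1)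
      |>.exists_injOn_of_encard_le (hGS C hC).2)
  choose! j hjmaps hjinj using hj
  set c := windowClass A.rel s
  have hc : ∀ x < s, c x ∈ windowClasses A.rel s := fun x hx => Set.mem_image_of_mem c hx
  have hxc : ∀ x < s, x ∈ c x := fun x hx => ⟨hx, A.equiv.refl x⟩
  have key : ∀ x < s, ∀ y < s, (S.rel (j (c x) x) (j (c y) y) ↔ A.rel x y) := by
    intro x hx y hy
    obtain ⟨u, hu⟩ := (hGS _ (hc x hx)).1
    obtain ⟨v, hv⟩ := (hGS _ (hc y hy)).1
    have hjx := hjmaps _ (hc x hx) (hxc x hx)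
    have hjy := hjmaps _ (hc y hy) (hxc y hy)
    rw [hu] at hjx; rw [hv] at hjy
    rw [rel_iff_classOf_eq hjx hjy, ← hu, ← hv, ← windowClass_eq_iff hy]
    exact hG.eq_iff (hc x hx) (hc y hy)
  refine ⟨fun x => j (c x) x, fun x hx y hy hxy => ?_, fun x hx y hy => (key x hx y hy).symm⟩
  have hcxy : c x = c y := (windowClass_eq_iff hy).mpr
    ((key x hx y hy).mp (by rw [show j (c y) y = j (c x) x from hxy.symm]; exact S.equiv.refl _))
  exact hjinj _ (hc x hx) (hxc x hx) (hcxy ▸ hxc y hy) (by simpa [hcxy] using hxy)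

lemma countGe_windowClasses_le (A : EqStruct) (W k : ℕ) :
    countGe (windowClasses A.rel W) k ≤ A.numClassesGe k := by
  refine (Set.encard_le_encard ?_).trans (Set.encard_image_le (· ∩ Set.Iio W) _)
  rintro _ ⟨⟨x, -, rfl⟩, hk⟩
  rw [windowClass_eq] at hk ⊢
  exact ⟨A.classOf x, ⟨⟨x, rfl⟩, hk.trans (Set.encard_le_encard Set.inter_subset_left)⟩, rfl⟩

lemma finEmbeds_of_numClassesGe_le (h : ∀ k, A.numClassesGe k ≤ S.numClassesGe k) :
    A.FinEmbeds S := by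
  classical
  intro s
  set F := (windowClasses_finite A.rel s).toFinset
  obtain ⟨G, hG, hGS⟩ := F.exists_injOn_of_card_filter_le Set.encard Set.encard
    {Y | ∃ u, Y = S.classOf u} fun C hC => by
      have hCfin : C.encard ≠ ⊤ := by
        obtain ⟨x, -, rfl⟩ := (Set.Finite.mem_toFinset _).mp hC
        exact Set.encard_ne_top_iff.mpr ((Set.finite_Iio s).subset fun _ h => h.1)
      rw [← ENat.natCast_toNat hCfin]
      calc ((F.filter fun D => (C.encard.toNat : ℕ∞) ≤ D.encard).card : ℕ∞)
          = countGe (windowClasses A.rel s) C.encard.toNat := by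
            rw [countGe, ← Set.encard_coe_eq_coe_finsetCard]
            simp [F]
        _ ≤ A.numClassesGe C.encard.toNat := countGe_windowClasses_le A s _
        _ ≤ S.numClassesGe C.encard.toNat := h _
  exact finEmbeds_of_matching s G (by simpa [F] using hG)
    fun C hC => hGS C ((Set.Finite.mem_toFinset _).mpr hC)

lemma classOf_mem_windowClasses {W x : ℕ} (h : A.classOf x ⊆ Set.Iio W) :
    A.classOf x ∈ windowClasses A.rel W :=
  ⟨x, h (A.equiv.refl x), by rw [windowClass_eq, Set.inter_eq_left.mpr h]⟩

lemma eventually_le_countGe (hA : ∀ x, (A.classOf x).Finite) {c k : ℕ}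
    (hc : c ≤ A.numClassesGe k) : ∀ᶠ W in atTop, c ≤ countGe (windowClasses A.rel W) k := by
  obtain ⟨t, hts, htc⟩ := Set.exists_subset_encard_eq hc
  have hsub : ∀ᶠ W in atTop, ∀ D ∈ t, D ⊆ Set.Iio W :=
    (Set.finite_of_encard_eq_coe htc).eventually_all.mpr fun D hD => by
      obtain ⟨⟨x, rfl⟩, -⟩ := hts hD
      exact (hA x).eventually_subset_Iio
  filter_upwards [hsub] with W hW
  rw [← htc]
  refine Set.encard_le_encard fun D hD => ?_
  obtain ⟨⟨x, rfl⟩, hk⟩ := hts hD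
  exact ⟨classOf_mem_windowClasses (hW _ hD), hk⟩

/-- Once the window contains the classes of all `x < v`, the window classes inside `[0, v)`
are genuine classes. -/
lemma countBelow_windowClasses_le {v W : ℕ} (h : ∀ x < v, A.classOf x ⊆ Set.Iio W) (k : ℕ) :
    countBelow (windowClasses A.rel W) v k ≤ A.numClasses k := by
  refine Set.encard_le_encard ?_
  rintro _ ⟨⟨x, hxW, rfl⟩, hv, hk⟩
  have hC : windowClass A.rel W x = A.classOf x := by
    rw [windowClass_eq, Set.inter_eq_left.mpr (h x (hv ⟨hxW, A.equiv.refl x⟩))]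
  exact ⟨⟨x, hC⟩, hk⟩

lemma eventually_le_countBelow {c k : ℕ} (hc : c ≤ A.numClasses k) :
    ∀ᶠ v in atTop, ∀ W ≥ v, c ≤ countBelow (windowClasses A.rel W) v k := by
  obtain ⟨t, hts, htc⟩ := Set.exists_subset_encard_eq hc
  have hsub : ∀ᶠ v in atTop, ∀ D ∈ t, D ⊆ Set.Iio v :=
    (Set.finite_of_encard_eq_coe htc).eventually_all.mpr fun D hD =>
      (Set.finite_of_encard_eq_coe (hts hD).2).eventually_subset_Iio
  filter_upwards [hsub] with v hv W hvW
  rw [← htc]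
  refine Set.encard_le_encard fun D hD => ?_
  obtain ⟨⟨x, rfl⟩, hk⟩ := hts hD
  have hDW : A.classOf x ⊆ Set.Iio W := (hv _ hD).trans (Set.Iio_subset_Iio hvW)
  exact ⟨classOf_mem_windowClasses hDW, hv _ hD, hk⟩

def Fits (E : EqStruct) (v : ℕ) (𝒞 : Set (Set ℕ)) : Prop :=
  (∀ k ≤ v, min (E.numClassesGe k) v ≤ countGe 𝒞 k) ∧ ∀ k : ℕ, countBelow 𝒞 v k ≤ E.numClasses k

lemma Fits.mono {v v' : ℕ} {𝒞 : Set (Set ℕ)} (h : Fits E v 𝒞) (hv : v' ≤ v) :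
    Fits E v' 𝒞 := by
  refine ⟨fun k hk => le_trans (min_le_min_left _ (by exact_mod_cast hv)) (h.1 k (hk.trans hv)),
    fun k => le_trans (Set.encard_le_encard ?_) (h.2 k)⟩
  exact fun C ⟨hC, hCv, hCk⟩ => ⟨hC, hCv.trans (Set.Iio_subset_Iio hv), hCk⟩

lemma Isom.fits_iff {E' : EqStruct} (h : E.Isom E') {v : ℕ} {𝒞 : Set (Set ℕ)} :
    Fits E v 𝒞 ↔ Fits E' v 𝒞 := by
  simp only [Fits, h.numClassesGe_eq, h.numClasses_eq]

lemma eventually_fits_windowClasses (hA : ∀ x, (A.classOf x).Finite)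
    (v : ℕ) : ∀ᶠ W in atTop, Fits A v (windowClasses A.rel W) := by
  have hbig : ∀ᶠ W in atTop, ∀ k ∈ Set.Iic v,
      min (A.numClassesGe k) v ≤ countGe (windowClasses A.rel W) k :=
    (Set.finite_Iic v).eventually_all.mpr fun k _ => by
      have hne : min (A.numClassesGe k) v ≠ ⊤ := ((min_le_right _ _).trans_lt (by simp)).ne
      simpa only [ENat.natCast_toNat hne] using
        A.eventually_le_countGe hA ((ENat.natCast_toNat hne).le.trans (min_le_left _ _))
  have hcomplete : ∀ᶠ W in atTop, ∀ x ∈ Set.Iio v, A.classOf x ⊆ Set.Iio W :=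
    (Set.finite_Iio v).eventually_all.mpr fun x _ => (hA x).eventually_subset_Iio
  filter_upwards [hbig, hcomplete] with W hW hWc
  exact ⟨hW, A.countBelow_windowClasses_le hWc⟩

def Survives (B E : EqStruct) (V : ℕ) : Prop := ∃ W, V ≤ W ∧ Fits E V (windowClasses B.rel W)

lemma eventually_numClassesGe_le (hB : ∀ x, (B.classOf x).Finite) :
    ∀ᶠ V in atTop, ∀ E, Survives B E V → ∀ k, E.numClassesGe k ≤ B.numClassesGe k := by
  filter_upwards [ENat.eventually_le_of_min_le fun k => exists_numClassesGe_eq_zero hB]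
    with V hV E ⟨W, _, hfit, _⟩
  exact hV _ E.numClassesGe_antitone fun k hk =>
    (hfit k hk).trans (B.countGe_windowClasses_le W k)

lemma eventually_mem_charOf (hB : ∀ x, (B.classOf x).Finite) {p : ℕ∞ × ℕ}
    (hp : p ∈ charOf B) : ∀ᶠ V in atTop, ∀ E, Survives B E V → p ∈ charOf E := by
  obtain ⟨k, i⟩ := p
  by_cases hi : i = 0
  · exact Eventually.of_forall fun _ E _ => by simp [charOf, hi]
  cases k with
  | top =>
    have : (i : ℕ∞) ≤ 0 := numClasses_top hB ▸ hp
    exact absurd (by exact_mod_cast nonpos_iff_eq_zero.mp this) hi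
  | coe k =>
    filter_upwards [B.eventually_le_countBelow hp] with V hV E ⟨W, hVW, _, hfit⟩
    exact (hV W hVW).trans (hfit k)

end EqStruct

open EqStruct

lemma FinTypes.mono {𝔅 𝔅' : Set EqStruct} (h : FinTypes 𝔅) (hsub : 𝔅' ⊆ 𝔅) : FinTypes 𝔅' :=
  let ⟨T, hT, hcov⟩ := h
  ⟨T, hT, fun B hB => hcov B (hsub hB)⟩

lemma FinTypes.union {𝔅 𝔅' : Set EqStruct} (h : FinTypes 𝔅) (h' : FinTypes 𝔅') :
    FinTypes (𝔅 ∪ 𝔅') := by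
  obtain ⟨T, hT, hcov⟩ := h
  obtain ⟨T', hT', hcov'⟩ := h'
  refine ⟨T ∪ T', hT.union hT', fun B hB => ?_⟩
  rcases hB with hB | hB
  · obtain ⟨C, hC, hBC⟩ := hcov B hB; exact ⟨C, Or.inl hC, hBC⟩
  · obtain ⟨C, hC, hBC⟩ := hcov' B hB; exact ⟨C, Or.inr hC, hBC⟩

lemma Set.Finite.finTypes {𝔅 : Set EqStruct} (h : 𝔅.Finite) : FinTypes 𝔅 :=
  ⟨𝔅, h, fun B hB => ⟨B, hB, Isom.refl B⟩⟩

/-- Otherwise a tail of `S` would have `A` as a limit. -/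
theorem FinitelySeparable.exists_isom {𝔄 : Set EqStruct} (h : FinitelySeparable 𝔄)
    {A : EqStruct} (hA : A ∈ 𝔄) {S : ℕ → EqStruct} (hS : ∀ V, S V ∈ 𝔄)
    (hfe : ∀ᶠ V in atTop, (S V).FinEmbeds A)
    (hchar : ∀ p ∈ charOf A, ∀ᶠ V in atTop, p ∈ charOf (S V)) :
    ∃ V, (S V).Isom A := by
  by_contra hne
  push Not at hne
  obtain ⟨V₀, hV₀⟩ := eventually_atTop.mp hfe
  apply h (S '' Set.Ici V₀) (Set.image_subset_iff.mpr fun V _ => hS V) A hA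
  by_cases hfin : FinTypes (S '' Set.Ici V₀)
  · left
    refine ⟨hfin, ?_⟩
    obtain ⟨T, hT, hcov⟩ := hfin
    obtain ⟨C, -, hC⟩ : ∃ C ∈ T, ∃ᶠ V in atTop, (S V).Isom C := by
      by_contra hno
      push Not at hno
      obtain ⟨V, hV, hVV₀⟩ := ((hT.eventually_all.mpr hno).and (eventually_ge_atTop V₀)).exists
      obtain ⟨C, hC, hiso⟩ := hcov (S V) ⟨V, hVV₀, rfl⟩
      exact hV C hC hiso
    obtain ⟨V₁, hV₁C, hV₁⟩ := (hC.and_eventually (eventually_ge_atTop V₀)).exists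
    refine ⟨S V₁, ⟨V₁, hV₁, rfl⟩, hne V₁, hV₀ V₁ hV₁, fun p hp => ?_⟩
    obtain ⟨V, hVC, hVp⟩ := (hC.and_eventually (hchar p hp)).exists
    rwa [hV₁C.charOf_eq, ← hVC.charOf_eq]
  · right
    refine ⟨hfin, ?_, fun p hp hfinp => hfin ?_⟩
    · rintro _ ⟨V, hV, rfl⟩
      exact ⟨hne V, hV₀ V hV⟩
    · obtain ⟨V₁, hV₁⟩ := eventually_atTop.mp (hchar p hp)
      refine (hfinp.union ((Set.finite_Ico V₀ V₁).image S).finTypes).mono ?_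
      rintro _ ⟨V, hV, rfl⟩
      by_cases hV1 : V₁ ≤ V
      · exact Or.inl ⟨⟨V, hV, rfl⟩, hV₁ V hV1⟩
      · exact Or.inr ⟨V, ⟨hV, not_le.mp hV1⟩, rfl⟩

open Classical

noncomputable def leastArgmax (s : Finset ℕ) (f : ℕ → ℕ) : Option ℕ :=
  if h : ∃ e ∈ s, ∀ e' ∈ s, f e' ≤ f e then some (Nat.find h) else none

lemma exists_leastArgmax_eq_some {s : Finset ℕ} {f : ℕ → ℕ} {e : ℕ} (he : e ∈ s) :
    ∃ w ∈ s, leastArgmax s f = some w ∧ f e ≤ f w ∧ ∀ e' ∈ s, f w ≤ f e' → w ≤ e' := by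
  have hex : ∃ e ∈ s, ∀ e' ∈ s, f e' ≤ f e := s.exists_max_image f ⟨e, he⟩
  obtain ⟨hws, hwmax⟩ := Nat.find_spec hex
  refine ⟨Nat.find hex, hws, by rw [leastArgmax, dif_pos hex], hwmax e he, fun e' he' hle => ?_⟩
  exact Nat.find_min' hex ⟨he', fun e'' he'' => (hwmax e'' he'').trans hle⟩

def observed (σ : List ((ℕ × ℕ) × Bool)) (x y : ℕ) : Prop := ((x, y), true) ∈ σ

noncomputable def decidedWindow (σ : List ((ℕ × ℕ) × Bool)) : ℕ :=
  Nat.findGreatest (fun m => ∀ x < m, ∀ y < m, ∃ b, ((x, y), b) ∈ σ) σ.length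

def observedClasses (σ : List ((ℕ × ℕ) × Bool)) : Set (Set ℕ) :=
  windowClasses (observed σ) (decidedWindow σ)

noncomputable def score (E : EqStruct) (σ : List ((ℕ × ℕ) × Bool)) : ℕ :=
  Nat.findGreatest (fun v => Fits E v (observedClasses σ)) (decidedWindow σ)

noncomputable def learner (Me : ℕ → EqStruct) (𝔄 : Set EqStruct) : Learner := fun σ =>
  leastArgmax ((Finset.range (σ.length + 1)).filter fun e => ∃ A ∈ 𝔄, (Me e).Isom A)
    fun e => score (Me e) σ

section Score

variable {E : EqStruct} {σ : List ((ℕ × ℕ) × Bool)} {v : ℕ}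

lemma le_score (h : Fits E v (observedClasses σ)) (hv : v ≤ decidedWindow σ) :
    v ≤ score E σ :=
  Nat.le_findGreatest hv h

lemma lt_decidedWindow_of_lt_score (h : v < score E σ) : v < decidedWindow σ :=
  h.trans_le (Nat.findGreatest_le _)

lemma fits_of_lt_score (h : v < score E σ) : Fits E v (observedClasses σ) :=
  have hfit : Fits E (score E σ) (observedClasses σ) :=
    Nat.findGreatest_of_ne_zero (P := fun v => Fits E v (observedClasses σ)) rfl (by omega)
  hfit.mono h.le

lemma EqStruct.Isom.score_eq {E' : EqStruct} (h : E.Isom E') : score E σ = score E' σ := by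
  unfold score
  congr 1
  exact funext fun v => propext h.fits_iff

end Score

lemma length_seg (I : ℕ → (ℕ × ℕ) × Bool) (n : ℕ) : (seg I n).length = n := by
  simp [seg]

namespace IsInformant

variable {B E : EqStruct} {I : ℕ → (ℕ × ℕ) × Bool}

lemma label_iff (hI : IsInformant B I) {n x y : ℕ} {b : Bool} (h : ((x, y), b) ∈ seg I n) :
    b = true ↔ B.rel x y := by
  obtain ⟨i, -, hi⟩ := List.mem_map.mp h
  simpa [hi] using hI.2 i

lemma observedClasses_seg (hI : IsInformant B I) (n : ℕ) :
    observedClasses (seg I n) = windowClasses B.rel (decidedWindow (seg I n)) := by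
  have hdec := Nat.findGreatest_spec (P := fun m => ∀ x < m, ∀ y < m, ∃ b, ((x, y), b) ∈ seg I n)
    (n := (seg I n).length) (Nat.zero_le _) (by simp)
  refine windowClasses_congr fun x hx y hy => ⟨fun h => (hI.label_iff h).mp rfl, fun h => ?_⟩
  obtain ⟨b, hb⟩ := hdec x hx y hy
  rwa [(hI.label_iff hb).mpr h] at hb

lemma tendsto_decidedWindow (hI : IsInformant B I) :
    Tendsto (fun n => decidedWindow (seg I n)) atTop atTop := by
  refine tendsto_atTop.mpr fun m => ?_
  have hpairs : ∀ᶠ n in atTop, ∀ p ∈ Set.Iio m ×ˢ Set.Iio m, ∃ b, (p, b) ∈ seg I n :=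
    ((Set.finite_Iio m).prod (Set.finite_Iio m)).eventually_all.mpr fun p _ => by
      obtain ⟨i, hi⟩ := hI.1 p
      filter_upwards [eventually_gt_atTop i] with n hn
      exact ⟨(I i).2, List.mem_map.mpr ⟨i, List.mem_range.mpr hn, by rw [← hi]⟩⟩
  filter_upwards [hpairs, eventually_ge_atTop m] with n hn hmn
  exact Nat.le_findGreatest (by rwa [length_seg]) fun x hx y hy => hn (x, y) ⟨hx, hy⟩

lemma eventually_lt_score (hI : IsInformant B I) (hB : ∀ x, (B.classOf x).Finite)
    (hE : E.Isom B) (V : ℕ) : ∀ᶠ n in atTop, V < score E (seg I n) := by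
  filter_upwards [hI.tendsto_decidedWindow.eventually
    ((B.eventually_fits_windowClasses hB (V + 1)).and (eventually_ge_atTop (V + 1)))]
    with n ⟨hfit, hle⟩
  exact le_score (by rwa [hI.observedClasses_seg, hE.fits_iff]) hle

lemma survives_of_lt_score (hI : IsInformant B I) {n V : ℕ} (h : V < score E (seg I n)) :
    Survives B E V :=
  ⟨_, (lt_decidedWindow_of_lt_score h).le, hI.observedClasses_seg n ▸ fits_of_lt_score h⟩

/-- Once `e₀` scores above `V`, so does whatever the learner prefers to it, and by minimality of
`e₀` that is not a copy of `B`. -/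
lemma exists_survivor (hI : IsInformant B I) (hB : ∀ x, (B.classOf x).Finite)
    {Me : ℕ → EqStruct} {𝔄 : Set EqStruct} {e₀ : ℕ} (he₀ : (Me e₀).Isom B)
    (he₀min : ∀ e, (Me e).Isom B → e₀ ≤ e) (he₀𝔄 : ∃ A ∈ 𝔄, (Me e₀).Isom A)
    (hfreq : ∃ᶠ n in atTop, learner Me 𝔄 (seg I n) ≠ some e₀) (V : ℕ) :
    ∃ e, (∃ A ∈ 𝔄, (Me e).Isom A) ∧ ¬ (Me e).Isom B ∧ Survives B (Me e) V := by
  obtain ⟨n, hne, hV, hn⟩ := (hfreq.and_eventually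
    ((hI.eventually_lt_score hB he₀ V).and (eventually_ge_atTop e₀))).exists
  have he₀c : e₀ ∈ (Finset.range ((seg I n).length + 1)).filter
      fun e => ∃ A ∈ 𝔄, (Me e).Isom A := by
    rw [Finset.mem_filter, Finset.mem_range, length_seg]
    exact ⟨by omega, he₀𝔄⟩
  obtain ⟨w, hwc, hlw, hsw, hwmin⟩ :=
    exists_leastArgmax_eq_some (f := fun e => score (Me e) (seg I n)) he₀c
  refine ⟨w, (Finset.mem_filter.mp hwc).2, fun hw => hne ?_,
    hI.survives_of_lt_score (hV.trans_le hsw)⟩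
  have hwe₀ : w ≤ e₀ := hwmin e₀ he₀c (by simp only [hw.score_eq, he₀.score_eq, le_refl])
  rw [learner, hlw, le_antisymm hwe₀ (he₀min w hw)]

end IsInformant

/-- characterization, hard direction: a finitely separable family of
equivalence structures with no infinite classes is InfEx-learnable up to isomorphism. -/
theorem stmt12 (Me : ℕ → EqStruct) (𝔄 : Set EqStruct)
    (hnoinf : ∀ A ∈ 𝔄, ∀ x, (A.classOf x).Finite)
    (hMe : ∀ A ∈ 𝔄, ∃ e, (Me e).Isom A)
    (h : FinitelySeparable 𝔄) :
    ∃ M : Learner, ∀ A ∈ 𝔄, InfExLearns Me EqStruct.Isom M A := by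
  refine ⟨learner Me 𝔄, fun A hA B hBA I hI => ?_⟩
  have hB := hBA.classOf_finite (hnoinf A hA)
  have hex : ∃ e, (Me e).Isom B := (hMe A hA).imp fun e he => he.trans hBA.symm
  refine ⟨Nat.find hex, Nat.find_spec hex, eventually_atTop.mp ?_⟩
  by_contra hconv
  choose e he𝔄 heB hsurv using hI.exists_survivor hB (Nat.find_spec hex)
    (fun e he => Nat.find_min' hex he) ⟨A, hA, (Nat.find_spec hex).trans hBA⟩
    (not_eventually.mp hconv)
  choose S hS hSe using he𝔄
  obtain ⟨V, hV⟩ := h.exists_isom hA hS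
    (by
      filter_upwards [eventually_numClassesGe_le hB] with V hV
      refine finEmbeds_of_numClassesGe_le fun k => ?_
      rw [← (hSe V).numClassesGe_eq, ← hBA.numClassesGe_eq]
      exact hV _ (hsurv V) k)
    (fun p hp => by
      filter_upwards [eventually_mem_charOf hB (hBA.charOf_eq ▸ hp)] with V hV
      exact (hSe V).charOf_eq ▸ hV _ (hsurv V))
  exact heB V ((hSe V).trans (hV.trans hBA.symm))
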